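/- arXiv:1011.0774 — 8 statements merged into one kernel-verified Lean document; each statement's English description precedes it below -/
import Mathlib

section
/- Let G be a connected simple graph on a finite vertex set V, let C ⊆ V be a clique, let f ∈ C be a loyal follower of C, and let l ∈ C with l ≠ f. Then for every vertex u ≠ f, d(l,u) ≤ d(f,u). -/
namespace SimpleGraph

variable {V : Type*} {G : SimpleGraph V}

/-- A shortest walk from `f` to `u` leaves `f` through a neighbour `w`; since `l` equals or is
adjacent to `w`, prepending that edge to the rest of the walk reaches `u` from `l` no later. -/
theorem Reachable.dist_le_dist_of_forall_adj {f l u : V} (hfu : G.Reachable f u) (hu : u ≠ f)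
    (h : ∀ w, G.Adj f w → l = w ∨ G.Adj l w) : G.dist l u ≤ G.dist f u := by
  obtain ⟨p, hp⟩ := hfu.exists_walk_length_eq_dist
  cases p with
  | nil => exact absurd rfl hu
  | cons hfw q =>
    rw [← hp, Walk.length_cons]
    rcases h _ hfw with rfl | hlw
    · exact (dist_le q).trans (Nat.le_succ _)
    · exact dist_le (Walk.cons hlw q)

end SimpleGraph

theorem leader_dist_le_follower_dist_general {V : Type*} (G : SimpleGraph V)
    (hconn : G.Connected) (C : Set V) (hC : G.IsClique C)
    (f : V) (hloyal : ∀ u : V, G.Adj f u → u ∈ C)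
    (l : V) (hlC : l ∈ C) :
    ∀ u : V, u ≠ f → G.dist l u ≤ G.dist f u := by
  intro u hu
  exact (hconn f u).dist_le_dist_of_forall_adj hu fun w hfw =>
    (em (l = w)).imp id (hC hlC (hloyal w hfw))

/-- Let G be a connected simple graph on a finite vertex set V, let C ⊆ V be a
clique, let f ∈ C be a loyal follower of C (every neighbor of f lies in C), and let l ∈ C with
l ≠ f. Then for every vertex u ≠ f, d(l,u) ≤ d(f,u). -/
theorem leader_dist_le_follower_dist {V : Type*} [Fintype V] (G : SimpleGraph V)
    (hconn : G.Connected) (C : Set V) (hC : G.IsClique C)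
    (f : V) (hfC : f ∈ C) (hloyal : ∀ u : V, G.Adj f u → u ∈ C)
    (l : V) (hlC : l ∈ C) (hlf : l ≠ f) :
    ∀ u : V, u ≠ f → G.dist l u ≤ G.dist f u :=
  leader_dist_le_follower_dist_general G hconn C hC f hloyal l hlC
end

section
/- Let G be a connected simple graph on a finite vertex set V, let C ⊆ V be a clique, let f ∈ C be a loyal follower of C, and let l ∈ C with l ≠ f. Then for every vertex u ∉ C, either d(f,u) = d(l,u) or d(f,u) = d(l,u) + 1. -/
namespace SimpleGraph

variable {V : Type*} {G : SimpleGraph V} {u v w : V}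

theorem Adj.dist_le_dist_add_one (h : G.Adj v w) (u : V) : G.dist v u ≤ G.dist w u + 1 :=
  calc G.dist v u ≤ G.dist v w + G.dist w u := h.reachable.dist_triangle_left u
    _ = G.dist w u + 1 := by rw [dist_eq_one_iff_adj.mpr h, add_comm]

theorem Reachable.exists_adj_dist_eq_add_one (h : G.Reachable v w) (hne : v ≠ w) :
    ∃ x, G.Adj v x ∧ G.dist v w = G.dist x w + 1 := by
  obtain ⟨p, hp⟩ := h.exists_walk_length_eq_dist
  cases p with
  | nil => exact absurd rfl hne
  | @cons _ x _ hadj q =>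
    refine ⟨x, hadj, le_antisymm (hadj.dist_le_dist_add_one w) ?_⟩
    rw [← hp, Walk.length_cons]
    exact Nat.add_le_add_right (dist_le q) 1

theorem IsClique.dist_le_one {C : Set V} (hC : G.IsClique C) (hv : v ∈ C) (hw : w ∈ C) :
    G.dist v w ≤ 1 := by
  rcases eq_or_ne v w with rfl | hne
  · simp
  · exact (dist_eq_one_iff_adj.mpr (hC hv hw hne)).le

end SimpleGraph

theorem follower_dist_eq_or_succ_general {V : Type*} (G : SimpleGraph V)
    (hconn : G.Connected) (C : Set V) (hC : G.IsClique C)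
    (f : V) (hfC : f ∈ C) (hloyal : ∀ u : V, G.Adj f u → u ∈ C)
    (l : V) (hlC : l ∈ C) (hlf : l ≠ f) :
    ∀ u : V, u ∉ C → G.dist f u = G.dist l u ∨ G.dist f u = G.dist l u + 1 := by
  intro u huC
  have hupper : G.dist f u ≤ G.dist l u + 1 :=
    (hC hfC hlC hlf.symm).dist_le_dist_add_one u
  -- a shortest path from `f` first steps to some `c ∈ C`, which is within distance 1 of `l`
  obtain ⟨c, hfc, hc⟩ :=
    (hconn.preconnected f u).exists_adj_dist_eq_add_one (ne_of_mem_of_not_mem hfC huC)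
  have hlower : G.dist l u ≤ G.dist f u :=
    calc G.dist l u ≤ G.dist l c + G.dist c u := hconn.dist_triangle
      _ ≤ 1 + G.dist c u := by gcongr; exact hC.dist_le_one hlC (hloyal c hfc)
      _ = G.dist f u := by rw [hc, add_comm]
  omega

/-- Let G be a connected simple graph on a finite vertex set V, let C ⊆ V be a
clique, let f ∈ C be a loyal follower of C, and let l ∈ C with l ≠ f. Then for every vertex
u ∉ C, either d(f,u) = d(l,u) or d(f,u) = d(l,u) + 1. -/
theorem follower_dist_eq_or_succ {V : Type*} [Fintype V] (G : SimpleGraph V)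
    (hconn : G.Connected) (C : Set V) (hC : G.IsClique C)
    (f : V) (hfC : f ∈ C) (hloyal : ∀ u : V, G.Adj f u → u ∈ C)
    (l : V) (hlC : l ∈ C) (hlf : l ≠ f) :
    ∀ u : V, u ∉ C → G.dist f u = G.dist l u ∨ G.dist f u = G.dist l u + 1 :=
  follower_dist_eq_or_succ_general G hconn C hC f hfC hloyal l hlC hlf
end

section
/- Let G be a connected simple graph on a finite vertex set V, let C ⊆ V be a clique, let f ∈ C be a loyal follower of C, and let l ∈ C be a vertex that is adjacent to at least one vertex outside of C. Then D(f) > D(l), i.e., the distance centrality of the loyal follower strictly exceeds the distance centrality of the leader. -/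
/-!
Every neighbour of the loyal follower `f` is the leader `l` or adjacent to it, so a shortest
path from `f` to any `u ≠ f` can be rerouted to start at `l` without getting longer:
`d(l, u) ≤ d(f, u)`. Comparing the two sums term by term, `f` loses `1` at `u = f`, but gains
`1` at `u = l` and at least `1` at a neighbour `x ∉ C` of `l`, which is at distance `≥ 2` from `f`.
-/

namespace SimpleGraph

variable {V : Type*} {G : SimpleGraph V}

theorem Reachable.dist_le_dist_of_forall_adj_eq_or_adj {f l u : V} (hfu : G.Reachable f u)
    (hne : u ≠ f) (hdom : ∀ w, G.Adj f w → w = l ∨ G.Adj l w) :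
    G.dist l u ≤ G.dist f u := by
  obtain ⟨p, hp⟩ := hfu.exists_walk_length_eq_dist
  cases p with
  | nil => exact absurd rfl hne
  | cons hfw q =>
    rw [← hp, Walk.length_cons]
    rcases hdom _ hfw with rfl | hlw
    · exact (dist_le q).trans (Nat.le_succ _)
    · exact dist_le (.cons hlw q)

theorem Connected.sum_dist_lt_sum_dist_of_forall_adj_eq_or_adj [Fintype V] (hconn : G.Connected)
    {f l x : V} (hfl : G.Adj f l) (hdom : ∀ w, G.Adj f w → w = l ∨ G.Adj l w)
    (hlx : G.Adj l x) (hxf : x ≠ f) (hfx : ¬G.Adj f x) :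
    ∑ u, G.dist l u < ∑ u, G.dist f u := by
  classical
  have hpointwise : ∀ u, G.dist l u + (if u = l then 1 else 0) + (if u = x then 1 else 0) ≤
      G.dist f u + (if u = f then 1 else 0) := by
    intro u
    by_cases huf : u = f
    · subst huf
      simp [hfl.ne, hxf.symm, dist_eq_one_iff_adj.2 hfl.symm]
    by_cases hul : u = l
    · subst hul
      simp [huf, hlx.ne, dist_eq_one_iff_adj.2 hfl]
    by_cases hux : u = x
    · subst hux
      have hfx_far := hconn.one_lt_dist_of_ne_of_not_adj (Ne.symm huf) hfx
      simp only [dist_eq_one_iff_adj.2 hlx, hul, huf, if_true, if_false]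
      omega
    · simpa [huf, hul, hux] using
        (hconn.preconnected f u).dist_le_dist_of_forall_adj_eq_or_adj huf hdom
  have hsum := Finset.sum_le_sum fun u (_ : u ∈ Finset.univ) => hpointwise u
  simp only [Finset.sum_add_distrib, Finset.sum_ite_eq', Finset.mem_univ, if_true] at hsum
  omega

end SimpleGraph

/-- Let G be a connected simple graph on a finite vertex set V, let C ⊆ V be a
clique, let f ∈ C be a loyal follower of C, and let l ∈ C be adjacent to at least one vertex
outside of C. Then D(f) > D(l), where D(v) = Σ_{u∈V} d(v,u) is the distance centrality. -/
theorem follower_centrality_gt_leader {V : Type*} [Fintype V] (G : SimpleGraph V)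
    (hconn : G.Connected) (C : Set V) (hC : G.IsClique C)
    (f : V) (hfC : f ∈ C) (hloyal : ∀ u : V, G.Adj f u → u ∈ C)
    (l : V) (hlC : l ∈ C) (hout : ∃ u : V, u ∉ C ∧ G.Adj l u) :
    (∑ u : V, G.dist f u) > (∑ u : V, G.dist l u) := by
  obtain ⟨x, hxC, hlx⟩ := hout
  have hfl : f ≠ l := by
    rintro rfl
    exact hxC (hloyal x hlx)
  have hdom : ∀ w, G.Adj f w → w = l ∨ G.Adj l w := fun w hfw =>
    (eq_or_ne w l).imp_right fun hwl => hC hlC (hloyal w hfw) hwl.symm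
  exact hconn.sum_dist_lt_sum_dist_of_forall_adj_eq_or_adj (hC hfC hlC hfl) hdom hlx
    (fun hxf => hxC (hxf ▸ hfC)) (fun hfx => hxC (hloyal x hfx))
end

section
/- Let G be a connected simple graph on a finite vertex set V, let C ⊆ V be a clique, and let f₁, f₂ ∈ C be two loyal followers of C. Then D(f₁) = D(f₂), i.e., any two loyal followers of the same community have equal distance centrality. -/
/-!
Two loyal followers of a clique are twins: apart from each other they have exactly the same
neighbours. A shortest path leaving one twin can therefore be rerouted through the other at
the same length, so both twins are equally far from every third vertex, and their distance sums
differ only in the terms `d(f₁, f₁) + d(f₁, f₂)` and `d(f₂, f₁) + d(f₂, f₂)`, which agree.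
-/

namespace SimpleGraph

variable {V : Type*} (G : SimpleGraph V)

def IsTwin (v w : V) : Prop :=
  ∀ x, x ≠ v → x ≠ w → (G.Adj v x ↔ G.Adj w x)

variable {G}

theorem IsTwin.symm {v w : V} (h : G.IsTwin v w) : G.IsTwin w v :=
  fun x hxw hxv => (h x hxv hxw).symm

theorem IsTwin.dist_le {v w x : V} (h : G.IsTwin v w) (hxv : x ≠ v) (hr : G.Reachable v x) :
    G.dist w x ≤ G.dist v x := by
  obtain ⟨p, hp⟩ := hr.exists_walk_length_eq_dist
  cases p with
  | nil => exact absurd rfl hxv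
  | @cons _ y _ hvy q =>
    rw [← hp]
    by_cases hyw : y = w
    · subst hyw
      exact (SimpleGraph.dist_le q).trans (Nat.le_succ _)
    · have hwy : G.Adj w y := (h y hvy.ne.symm hyw).mp hvy
      exact SimpleGraph.dist_le (Walk.cons hwy q)

theorem IsTwin.dist_eq {v w x : V} (hconn : G.Preconnected) (h : G.IsTwin v w)
    (hxv : x ≠ v) (hxw : x ≠ w) : G.dist v x = G.dist w x :=
  le_antisymm (h.symm.dist_le hxw (hconn w x)) (h.dist_le hxv (hconn v x))

theorem IsTwin.sum_dist_eq [Fintype V] {v w : V} (hconn : G.Preconnected) (h : G.IsTwin v w) :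
    ∑ x, G.dist v x = ∑ x, G.dist w x := by
  classical
  refine Fintype.sum_equiv (Equiv.swap v w) _ _ fun x => ?_
  by_cases hxv : x = v
  · subst hxv
    simp
  by_cases hxw : x = w
  · subst hxw
    simp [dist_comm]
  · rw [Equiv.swap_apply_of_ne_of_ne hxv hxw, h.dist_eq hconn hxv hxw]

theorem IsClique.isTwin_of_neighbors_mem {C : Set V} (hC : G.IsClique C) {v w : V}
    (hv : v ∈ C) (hw : w ∈ C) (hloyal_v : ∀ u, G.Adj v u → u ∈ C)
    (hloyal_w : ∀ u, G.Adj w u → u ∈ C) : G.IsTwin v w :=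
  fun x hxv hxw =>
    ⟨fun hvx => hC hw (hloyal_v x hvx) hxw.symm, fun hwx => hC hv (hloyal_w x hwx) hxv.symm⟩

end SimpleGraph

/-- Let G be a connected simple graph on a finite vertex set V, let C ⊆ V be a
clique, and let f₁, f₂ ∈ C be two loyal followers of C. Then D(f₁) = D(f₂), i.e., any two loyal
followers of the same community have equal distance centrality D(v) = Σ_{u∈V} d(v,u). -/
theorem followers_equal_centrality {V : Type*} [Fintype V] (G : SimpleGraph V)
    (hconn : G.Connected) (C : Set V) (hC : G.IsClique C)
    (f₁ : V) (hf₁C : f₁ ∈ C) (hloyal₁ : ∀ u : V, G.Adj f₁ u → u ∈ C)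
    (f₂ : V) (hf₂C : f₂ ∈ C) (hloyal₂ : ∀ u : V, G.Adj f₂ u → u ∈ C) :
    (∑ u : V, G.dist f₁ u) = (∑ u : V, G.dist f₂ u) :=
  (hC.isTwin_of_neighbors_mem hf₁C hf₂C hloyal₁ hloyal₂).sum_dist_eq hconn.preconnected
end

section
/- Let G be a connected simple graph on a finite vertex set V, let C ⊆ V be a clique, and let f ∈ C be a loyal follower of C. Then for every neighbor u of f, D(u) ≤ D(f). In particular, a loyal follower is never detected as a leader by the leader-detection rule (which declares v a leader when some neighbor u of v satisfies D(v) < D(u)). -/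
/-! Every neighbour of a loyal follower `f` lies in the clique, so it is `u` itself or adjacent
to `u`. Hence a shortest path from `f` to any `w ≠ f` can be rerouted to start at `u` without
getting longer, so `d(u, w) ≤ d(f, w)`. Summing, with the terms for `w = f` and `w = u`
exchanged (`d(u, f) = d(f, u)` and `d(u, u) = 0 = d(f, f)`), gives `D(u) ≤ D(f)`. -/

namespace SimpleGraph

variable {V : Type*} {G : SimpleGraph V} {f u : V}

theorem dist_le_dist_of_forall_adj_imp_adj (hfu : G.Reachable f u)
    (hN : ∀ x, G.Adj f x → x ≠ u → G.Adj u x) {w : V} (hw : w ≠ f) :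
    G.dist u w ≤ G.dist f w := by
  by_cases hfw : G.Reachable f w
  · obtain ⟨p, hp⟩ := hfw.exists_walk_length_eq_dist
    cases p with
    | nil => exact absurd rfl hw
    | @cons _ x _ hfx q =>
      rw [← hp, Walk.length_cons]
      by_cases hxu : x = u
      · subst hxu
        exact (dist_le q).trans (Nat.le_succ _)
      · exact dist_le (Walk.cons (hN x hfx hxu) q)
  · have huw : ¬G.Reachable u w := fun huw => hfw (hfu.trans huw)
    rw [dist_eq_zero_of_not_reachable huw]
    exact Nat.zero_le _

theorem sum_dist_le_sum_dist_of_forall_ne [Fintype V]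
    (h : ∀ w, w ≠ f → G.dist u w ≤ G.dist f w) :
    ∑ w, G.dist u w ≤ ∑ w, G.dist f w := by
  classical
  calc ∑ w, G.dist u w ≤ ∑ w, G.dist f (Equiv.swap f u w) := by
        refine Finset.sum_le_sum fun w _ => ?_
        by_cases hwf : w = f
        · rw [hwf, Equiv.swap_apply_left, dist_comm]
        by_cases hwu : w = u
        · rw [hwu, dist_self]
          exact Nat.zero_le _
        rw [Equiv.swap_apply_of_ne_of_ne hwf hwu]
        exact h w hwf
    _ = ∑ w, G.dist f w := Equiv.sum_comp (Equiv.swap f u) (G.dist f)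

end SimpleGraph

theorem follower_is_local_max_general {V : Type*} [Fintype V] (G : SimpleGraph V)
    (C : Set V) (hC : G.IsClique C)
    (f : V) (hloyal : ∀ u : V, G.Adj f u → u ∈ C) :
    ∀ u : V, G.Adj f u → (∑ w : V, G.dist u w) ≤ (∑ w : V, G.dist f w) := by
  intro u hfu
  refine G.sum_dist_le_sum_dist_of_forall_ne fun w hw => ?_
  refine G.dist_le_dist_of_forall_adj_imp_adj hfu.reachable (fun x hfx hxu => ?_) hw
  exact hC (hloyal u hfu) (hloyal x hfx) (Ne.symm hxu)

/-- Let G be a connected simple graph on a finite vertex set V, let C ⊆ V be a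
clique, and let f ∈ C be a loyal follower of C. Then for every neighbor u of f, D(u) ≤ D(f),
where D(v) = Σ_{u∈V} d(v,u). So a loyal follower is never detected as a leader by the rule
that declares v a leader when some neighbor u of v satisfies D(v) < D(u). -/
theorem follower_is_local_max {V : Type*} [Fintype V] (G : SimpleGraph V)
    (hconn : G.Connected) (C : Set V) (hC : G.IsClique C)
    (f : V) (hfC : f ∈ C) (hloyal : ∀ u : V, G.Adj f u → u ∈ C) :
    ∀ u : V, G.Adj f u → (∑ w : V, G.dist u w) ≤ (∑ w : V, G.dist f w) :=
  follower_is_local_max_general G C hC f hloyal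
end

section
/- Let G be a connected simple graph on a finite vertex set V, let C ⊆ V be a clique containing at least one loyal follower, and let l ∈ C be a vertex adjacent to at least one vertex outside of C. Then there exists a neighbor u of l with D(l) < D(u); i.e., every leader is detected by the leader-detection rule (which declares v a leader when some neighbor u of v satisfies D(v) < D(u)). -/
/-!
Let `f` be a loyal follower of `C`; it differs from `l`, since `l` has a neighbour outside `C`,
so `l` and `f` are adjacent and every neighbour of `f` is `l` or a neighbour of `l`. A geodesic
from `f` to any `w ≠ f` leaves `f` through such a neighbour, hence `d(l, w) ≤ d(f, w)`. Comparing
`D(l)` with `D(f)` after exchanging the terms at `l` and `f`, all terms satisfy this inequality,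
and it is strict at the neighbour `u ∉ C` of `l`, which is at distance at least `2` from `f`.
-/

open Finset

namespace SimpleGraph

variable {V : Type*} {G : SimpleGraph V}

lemma Reachable.exists_adj_dist_add_one_eq {f w : V} (h : G.Reachable f w) (hne : f ≠ w) :
    ∃ c, G.Adj f c ∧ G.dist c w + 1 = G.dist f w := by
  obtain ⟨p, hp⟩ := h.exists_walk_length_eq_dist
  cases p with
  | nil => exact absurd rfl hne
  | cons hfc q =>
    refine ⟨_, hfc, le_antisymm ?_ ?_⟩
    · rw [← hp, Walk.length_cons]
      exact Nat.succ_le_succ (dist_le q)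
    · have := hfc.reachable.dist_triangle_left w
      rw [dist_eq_one_iff_adj.mpr hfc] at this
      omega

lemma dist_le_dist_of_forall_adj_imp_eq_or_adj {l f w : V} (hfw : G.Reachable f w)
    (hdom : ∀ c, G.Adj f c → c = l ∨ G.Adj l c) (hw : w ≠ f) :
    G.dist l w ≤ G.dist f w := by
  obtain ⟨c, hfc, hc⟩ := hfw.exists_adj_dist_add_one_eq hw.symm
  have hlc : G.dist l c ≤ 1 := by
    rcases hdom c hfc with rfl | hlc
    · simp
    · exact (dist_eq_one_iff_adj.mpr hlc).le
  have := (hfc.reachable.symm.trans hfw).dist_triangle_right l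
  omega

lemma sum_dist_lt_sum_dist_of_forall_adj_imp_eq_or_adj [Fintype V] {l f u : V}
    (hconn : G.Connected) (hlf : G.Adj l f) (hdom : ∀ c, G.Adj f c → c = l ∨ G.Adj l c)
    (hlu : G.Adj l u) (hfu : ¬G.Adj f u) (huf : u ≠ f) :
    ∑ w, G.dist l w < ∑ w, G.dist f w := by
  classical
  -- reindexing by the transposition of `l` and `f` matches `d(l, f)` with `d(f, l)`
  rw [← Equiv.sum_comp (Equiv.swap l f)]
  refine sum_lt_sum (fun w _ ↦ ?_) ⟨u, mem_univ u, ?_⟩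
  · rcases eq_or_ne w l with rfl | hwl
    · rw [Equiv.swap_apply_left, dist_comm]
    rcases eq_or_ne w f with rfl | hwf
    · simp
    rw [Equiv.swap_apply_of_ne_of_ne hwl hwf]
    exact dist_le_dist_of_forall_adj_imp_eq_or_adj (hconn f w) hdom hwf
  · rw [Equiv.swap_apply_of_ne_of_ne hlu.ne' huf, dist_eq_one_iff_adj.mpr hlu]
    exact hconn.one_lt_dist_of_ne_of_not_adj huf.symm hfu

end SimpleGraph

/-- Let G be a connected simple graph on a finite vertex set V, let C ⊆ V be a
clique containing at least one loyal follower, and let l ∈ C be a vertex adjacent to at least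
one vertex outside of C. Then there exists a neighbor u of l with D(l) < D(u); i.e., every
leader is detected by the leader-detection rule. -/
theorem leader_is_detected {V : Type*} [Fintype V] (G : SimpleGraph V)
    (hconn : G.Connected) (C : Set V) (hC : G.IsClique C)
    (hfollower : ∃ f ∈ C, ∀ u : V, G.Adj f u → u ∈ C)
    (l : V) (hlC : l ∈ C) (hout : ∃ u : V, u ∉ C ∧ G.Adj l u) :
    ∃ u : V, G.Adj l u ∧ (∑ w : V, G.dist l w) < (∑ w : V, G.dist u w) := by
  obtain ⟨f, hfC, hf⟩ := hfollower
  obtain ⟨u, huC, hlu⟩ := hout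
  have hfl : f ≠ l := by
    rintro rfl
    exact huC (hf u hlu)
  have hlf : G.Adj l f := hC hlC hfC hfl.symm
  have hdom : ∀ c, G.Adj f c → c = l ∨ G.Adj l c := fun c hfc ↦
    (eq_or_ne c l).imp_right fun hcl ↦ hC hlC (hf c hfc) hcl.symm
  exact ⟨f, hlf, G.sum_dist_lt_sum_dist_of_forall_adj_imp_eq_or_adj hconn hlf hdom hlu
    (fun hfu ↦ huC (hf u hfu)) (fun huf ↦ huC (huf ▸ hfC))⟩
end

section
/- Let G be a simple graph on a finite vertex set V, and suppose P = {C_1, …, C_k} and P' = {C'_1, …, C'_m} are both community structures on G, i.e., partitions of V into nonempty sets each of which is a clique and contains a loyal follower. Then P = P' (the community structure of a graph, when it exists, is unique). -/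
/-
If `f` is a loyal follower of a part `C'` and `C` is the part of another community structure
containing `f`, then every vertex of the clique `C` is `f` or a neighbour of `f`, so `C ⊆ C'`.
A loyal follower of `C` then lies in `C'`, and the same argument gives `C' ⊆ C`.
-/

/-- A community structure on `G`: a partition of the vertex set into nonempty sets, each of
which is a clique and contains a loyal follower (a vertex all of whose neighbors lie in
the set). -/
def IsCommunityStructure {V : Type*} (G : SimpleGraph V) (P : Set (Set V)) : Prop :=
  Setoid.IsPartition P ∧
    ∀ C ∈ P, G.IsClique C ∧ ∃ f ∈ C, ∀ u : V, G.Adj f u → u ∈ C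

theorem SimpleGraph.IsClique.subset_of_loyal {V : Type*} {G : SimpleGraph V} {C D : Set V}
    (hC : G.IsClique C) {f : V} (hfC : f ∈ C) (hfD : f ∈ D) (hf : ∀ u, G.Adj f u → u ∈ D) :
    C ⊆ D := by
  intro u hu
  rcases eq_or_ne f u with rfl | hne
  · exact hfD
  · exact hf u (hC hfC hu hne)

theorem IsCommunityStructure.subset {V : Type*} {G : SimpleGraph V} {P P' : Set (Set V)}
    (hP : IsCommunityStructure G P) (hP' : IsCommunityStructure G P') : P' ⊆ P := by
  intro C' hC'
  obtain ⟨hclique', f', hf'C', hf'loyal⟩ := hP'.2 C' hC'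
  obtain ⟨C, ⟨hCP, hf'C⟩, -⟩ := hP.1.2 f'
  obtain ⟨hclique, f, hfC, hfloyal⟩ := hP.2 C hCP
  have hCC' : C ⊆ C' := hclique.subset_of_loyal hf'C hf'C' hf'loyal
  have hC'C : C' ⊆ C := hclique'.subset_of_loyal (hCC' hfC) hfC hfloyal
  rwa [hC'C.antisymm hCC']

theorem community_structure_unique_general {V : Type*} (G : SimpleGraph V)
    (P P' : Set (Set V))
    (hP : IsCommunityStructure G P) (hP' : IsCommunityStructure G P') :
    P = P' :=
  (hP'.subset hP).antisymm (hP.subset hP')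

/-- Let G be a simple graph on a finite vertex set V, and suppose P and P' are
both community structures on G. Then P = P': the community structure of a graph, when it
exists, is unique. -/
theorem community_structure_unique {V : Type*} [Fintype V] (G : SimpleGraph V)
    (P P' : Set (Set V))
    (hP : IsCommunityStructure G P) (hP' : IsCommunityStructure G P') :
    P = P' :=
  community_structure_unique_general G P P' hP hP'
end

section
/- Let G be a connected simple graph on a finite vertex set V, and let P = {C_1, …, C_k} be a community structure on G, i.e., a partition of V into nonempty sets each of which is a clique and contains a loyal follower. Then P equals the collection of closed neighborhoods of the vertices that are local maxima of distance centrality: P = { {f} ∪ N(f) : f ∈ V and D(u) ≤ D(f) for every neighbor u of f }, where N(f) denotes the set of neighbors of f. In particular, the communities can be recovered exactly from the graph via distance centrality. -/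
open Finset

namespace SimpleGraph

variable {V : Type*} {G : SimpleGraph V} {C : Set V} {f u w : V}

noncomputable def distanceCentrality [Fintype V] (G : SimpleGraph V) (v : V) : ℕ :=
  ∑ w, G.dist v w

lemma subset_insert_neighborSet_of_isClique (hC : G.IsClique C) (hu : u ∈ C) :
    C ⊆ insert u (G.neighborSet u) := by
  intro v hv
  rcases eq_or_ne v u with rfl | hvu
  · exact Set.mem_insert _ _
  · exact Set.mem_insert_of_mem _ (hC hu hv hvu.symm)

lemma insert_neighborSet_eq_of_isClique (hC : G.IsClique C) (hf : f ∈ C)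
    (hN : G.neighborSet f ⊆ C) : insert f (G.neighborSet f) = C :=
  (Set.insert_subset hf hN).antisymm (subset_insert_neighborSet_of_isClique hC hf)

lemma dist_le_dist_of_neighborSet_subset (hconn : G.Connected)
    (h : G.neighborSet f ⊆ insert u (G.neighborSet u)) (hwf : w ≠ f) :
    G.dist u w ≤ G.dist f w := by
  obtain ⟨p, hp⟩ := hconn.exists_walk_length_eq_dist f w
  cases p with
  | nil => exact absurd rfl hwf
  | @cons _ v _ hfv q =>
    have huv : G.dist u v ≤ 1 := by
      rcases h hfv with rfl | huv
      · simp
      · exact (dist_eq_one_iff_adj.mpr huv).le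
    calc G.dist u w ≤ G.dist u v + G.dist v w := hconn.dist_triangle
      _ ≤ 1 + q.length := add_le_add huv (dist_le q)
      _ = G.dist f w := by rw [← hp, Walk.length_cons, add_comm]

lemma dist_le_dist_swap [DecidableEq V] (hconn : G.Connected)
    (h : G.neighborSet f ⊆ insert u (G.neighborSet u)) (w : V) :
    G.dist u w ≤ G.dist f (Equiv.swap u f w) := by
  rcases eq_or_ne w u with rfl | hwu
  · simp
  rcases eq_or_ne w f with rfl | hwf
  · rw [Equiv.swap_apply_right, dist_comm]
  rw [Equiv.swap_apply_of_ne_of_ne hwu hwf]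
  exact dist_le_dist_of_neighborSet_subset hconn h hwf

variable [Fintype V]

lemma distanceCentrality_le_of_neighborSet_subset (hconn : G.Connected)
    (h : G.neighborSet f ⊆ insert u (G.neighborSet u)) :
    G.distanceCentrality u ≤ G.distanceCentrality f := by
  classical
  calc G.distanceCentrality u ≤ ∑ w, G.dist f (Equiv.swap u f w) :=
        sum_le_sum fun w _ => dist_le_dist_swap hconn h w
    _ = G.distanceCentrality f := Equiv.sum_comp (Equiv.swap u f) (G.dist f)

lemma dist_eq_dist_of_distanceCentrality_le (hconn : G.Connected)
    (h : G.neighborSet f ⊆ insert u (G.neighborSet u))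
    (hD : G.distanceCentrality f ≤ G.distanceCentrality u) (hwu : w ≠ u) (hwf : w ≠ f) :
    G.dist u w = G.dist f w := by
  classical
  have hsum : ∑ w, G.dist u w = ∑ w, G.dist f (Equiv.swap u f w) := by
    rw [Equiv.sum_comp (Equiv.swap u f) (G.dist f)]
    exact (distanceCentrality_le_of_neighborSet_subset hconn h).antisymm hD
  have := (sum_eq_sum_iff_of_le fun w _ => dist_le_dist_swap hconn h w).mp hsum w (mem_univ w)
  rwa [Equiv.swap_apply_of_ne_of_ne hwu hwf] at this

lemma neighborSet_subset_of_distanceCentrality_le (hconn : G.Connected)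
    (h : G.neighborSet f ⊆ insert u (G.neighborSet u))
    (hD : G.distanceCentrality f ≤ G.distanceCentrality u) :
    G.neighborSet u ⊆ insert f (G.neighborSet f) := by
  intro x hux
  rcases eq_or_ne x f with rfl | hxf
  · exact Set.mem_insert _ _
  have hfx : G.dist f x = 1 := by
    rw [← dist_eq_dist_of_distanceCentrality_le hconn h hD hux.ne' hxf]
    exact dist_eq_one_iff_adj.mpr hux
  exact Set.mem_insert_of_mem _ (dist_eq_one_iff_adj.mp hfx)

end SimpleGraph

open SimpleGraph

section

variable {V : Type*} [Fintype V] {G : SimpleGraph V} {P : Set (Set V)} {C : Set V} {f : V}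

lemma IsCommunityStructure.exists_localMax_eq_insert_neighborSet (hconn : G.Connected)
    (hP : IsCommunityStructure G P) (hC : C ∈ P) :
    ∃ f, (∀ u, G.Adj f u → G.distanceCentrality u ≤ G.distanceCentrality f) ∧
      C = insert f (G.neighborSet f) := by
  obtain ⟨hclique, f, hf, hloyal⟩ := hP.2 C hC
  refine ⟨f, fun u hfu => ?_, (insert_neighborSet_eq_of_isClique hclique hf hloyal).symm⟩
  exact distanceCentrality_le_of_neighborSet_subset hconn
    (Set.Subset.trans hloyal (subset_insert_neighborSet_of_isClique hclique (hloyal u hfu)))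

lemma IsCommunityStructure.insert_neighborSet_mem (hconn : G.Connected)
    (hP : IsCommunityStructure G P)
    (hmax : ∀ u, G.Adj f u → G.distanceCentrality u ≤ G.distanceCentrality f) :
    insert f (G.neighborSet f) ∈ P := by
  obtain ⟨C, ⟨hC, hf⟩, -⟩ := hP.1.2 f
  obtain ⟨hclique, g, hg, hloyal⟩ := hP.2 C hC
  suffices hN : G.neighborSet f ⊆ C by rwa [insert_neighborSet_eq_of_isClique hclique hf hN]
  rcases eq_or_ne g f with rfl | hgf
  · exact hloyal
  have hNg : G.neighborSet g ⊆ insert f (G.neighborSet f) :=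
    Set.Subset.trans hloyal (subset_insert_neighborSet_of_isClique hclique hf)
  calc G.neighborSet f
      ⊆ insert g (G.neighborSet g) :=
        neighborSet_subset_of_distanceCentrality_le hconn hNg (hmax g (hclique hf hg hgf.symm))
    _ ⊆ C := Set.insert_subset hg hloyal

end

/-- Let G be a connected simple graph on a finite vertex set V, and let P be a
community structure on G. Then P equals the collection of closed neighborhoods of the vertices
that are local maxima of the distance centrality D(v) = Σ_{u∈V} d(v,u):
P = { {f} ∪ N(f) : f ∈ V, D(u) ≤ D(f) for every neighbor u of f }. -/
theorem community_structure_recovered {V : Type*} [Fintype V] (G : SimpleGraph V)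
    (hconn : G.Connected) (P : Set (Set V)) (hP : IsCommunityStructure G P) :
    P = {S : Set V | ∃ f : V,
          (∀ u : V, G.Adj f u → (∑ w : V, G.dist u w) ≤ (∑ w : V, G.dist f w)) ∧
          S = {f} ∪ G.neighborSet f} := by
  ext S
  constructor
  · intro hS
    obtain ⟨f, hmax, rfl⟩ := hP.exists_localMax_eq_insert_neighborSet hconn hS
    exact ⟨f, hmax, Set.insert_eq f _⟩
  · rintro ⟨f, hmax, rfl⟩
    rw [← Set.insert_eq]
    exact hP.insert_neighborSet_mem hconn hmax
end
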